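/- arXiv:1409.2810 — 2 statements merged into one kernel-verified Lean document; each statement's English description precedes it below -/
import Mathlib

section
/- Let E and F be equivalence relations on sets X and Y respectively. There exists an injective reduction φ from E to F whose range is F-invariant (an invariant embedding) if and only if for every cardinal κ, the number of E-classes of cardinality κ is at most the number of F-classes of cardinality κ. -/
universe u

/-- The set of equivalence classes of `E`. -/
def EqClasses {X : Type u} (E : X → X → Prop) : Set (Set X) :=
  {C | ∃ x, C = {y | E x y}}

/-- The number of `E`-classes of cardinality exactly `κ`. -/
noncomputable def nEq {X : Type u} (E : X → X → Prop) (κ : Cardinal.{u}) : Cardinal.{u} :=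
  Cardinal.mk {C : Set X // C ∈ EqClasses E ∧ Cardinal.mk C = κ}

/-- The number of `E`-classes of cardinality at most `κ`. -/
noncomputable def nLe {X : Type u} (E : X → X → Prop) (κ : Cardinal.{u}) : Cardinal.{u} :=
  Cardinal.mk {C : Set X // C ∈ EqClasses E ∧ Cardinal.mk C ≤ κ}

/-- The number of `E`-classes of cardinality at least `κ`. -/
noncomputable def nGe {X : Type u} (E : X → X → Prop) (κ : Cardinal.{u}) : Cardinal.{u} :=
  Cardinal.mk {C : Set X // C ∈ EqClasses E ∧ κ ≤ Cardinal.mk C}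

/-!
An invariant embedding maps every `E`-class bijectively onto an `F`-class, and distinct classes
onto distinct classes; this gives the inequalities. Conversely, the inequalities glue, over all
cardinals `κ`, to an injection `G` from `E`-classes to `F`-classes preserving cardinality; an
invariant embedding is then obtained by mapping each class `C` bijectively onto `G C`.
-/

open Function Cardinal

def IsInvariantEmbedding {X Y : Type*} (E : X → X → Prop) (F : Y → Y → Prop) (φ : X → Y) :
    Prop :=
  Injective φ ∧ (∀ x x' : X, E x x' ↔ F (φ x) (φ x')) ∧
    ∀ y y' : Y, y ∈ Set.range φ → F y y' → y' ∈ Set.range φ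

section FiberwiseMap

variable {X Y A B : Type*}

def fiberwiseMap (p : X → A) (q : Y → B) (g : A → B)
    (e : ∀ a, {x // p x = a} → {y // q y = g a}) (x : X) : Y :=
  (e (p x) ⟨x, rfl⟩).1

variable {p : X → A} {q : Y → B} {g : A → B} {e : ∀ a, {x // p x = a} → {y // q y = g a}}

theorem fiberwiseMap_eq {x : X} {a : A} (h : p x = a) :
    fiberwiseMap p q g e x = (e a ⟨x, h⟩).1 := by
  subst h; rfl

theorem comp_fiberwiseMap (x : X) : q (fiberwiseMap p q g e x) = g (p x) :=
  (e (p x) ⟨x, rfl⟩).2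

theorem fiberwiseMap_injective (hg : Injective g) (he : ∀ a, Injective (e a)) :
    Injective (fiberwiseMap p q g e) := by
  intro x x' h
  have hp : p x' = p x :=
    hg (by rw [← comp_fiberwiseMap (e := e), ← comp_fiberwiseMap (e := e), h])
  rw [fiberwiseMap_eq rfl, fiberwiseMap_eq hp] at h
  exact congrArg Subtype.val (he _ (Subtype.ext h))

theorem range_fiberwiseMap (he : ∀ a, Surjective (e a)) :
    Set.range (fiberwiseMap p q g e) = q ⁻¹' Set.range g := by
  ext y
  constructor
  · rintro ⟨x, rfl⟩
    exact ⟨p x, (comp_fiberwiseMap x).symm⟩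
  · rintro ⟨a, ha⟩
    obtain ⟨⟨x, hx⟩, hxy⟩ := he a ⟨y, ha.symm⟩
    exact ⟨x, (fiberwiseMap_eq hx).trans (congrArg Subtype.val hxy)⟩

end FiberwiseMap

theorem exists_injective_forall_eq_of_forall_mk_le {A B : Type u} {K : Type*}
    (c : A → K) (d : B → K) (h : ∀ k, #{a // c a = k} ≤ #{b // d b = k}) :
    ∃ g : A → B, Injective g ∧ ∀ a, d (g a) = c a := by
  let e := fun k => (Cardinal.le_def _ _ |>.1 (h k)).some
  exact ⟨fiberwiseMap c d id fun k => e k,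
    fiberwiseMap_injective injective_id fun k => (e k).injective, comp_fiberwiseMap⟩

section EqClasses

variable {X Y : Type u} {E : X → X → Prop} {F : Y → Y → Prop}

def classOf (E : X → X → Prop) (x : X) : EqClasses E :=
  ⟨{y | E x y}, x, rfl⟩

theorem classOf_eq_iff_mem (hE : Equivalence E) {x : X} {C : EqClasses E} :
    classOf E x = C ↔ x ∈ (C : Set X) := by
  obtain ⟨C, z, rfl⟩ := C
  rw [Subtype.ext_iff]
  change {y | E x y} = {y | E z y} ↔ E z x
  constructor
  · intro h
    exact (Set.ext_iff.1 h x).1 (hE.refl x)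
  · intro hzx
    ext y
    exact ⟨hE.trans hzx, hE.trans (hE.symm hzx)⟩

theorem classOf_eq_classOf_iff (hE : Equivalence E) {x x' : X} :
    classOf E x = classOf E x' ↔ E x' x :=
  classOf_eq_iff_mem hE

theorem mk_fiber_classOf (hE : Equivalence E) (C : EqClasses E) :
    #{x // classOf E x = C} = #(C : Set X) :=
  mk_congr (Equiv.subtypeEquivRight fun _ => classOf_eq_iff_mem hE)

theorem nEq_eq_mk (E : X → X → Prop) (κ : Cardinal.{u}) :
    nEq E κ = #{C : EqClasses E // #(C : Set X) = κ} :=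
  mk_congr (Equiv.subtypeSubtypeEquivSubtypeInter _ _).symm

theorem image_setOf_rel {φ : X → Y} (hφ : IsInvariantEmbedding E F φ) (x : X) :
    φ '' {x' | E x x'} = {y | F (φ x) y} := by
  obtain ⟨-, hred, hinv⟩ := hφ
  ext y
  constructor
  · rintro ⟨x', hx', rfl⟩
    exact (hred x x').1 hx'
  · intro hy
    obtain ⟨x', rfl⟩ := hinv _ _ ⟨x, rfl⟩ hy
    exact ⟨x', (hred x x').2 hy, rfl⟩

theorem nEq_le_nEq_of_isInvariantEmbedding {φ : X → Y} (hφ : IsInvariantEmbedding E F φ)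
    (κ : Cardinal.{u}) : nEq E κ ≤ nEq F κ := by
  refine mk_le_of_injective (f := fun C => ⟨φ '' C.1, ?_, ?_⟩) ?_
  · obtain ⟨x, hx⟩ := C.2.1
    exact ⟨φ x, hx ▸ image_setOf_rel hφ x⟩
  · rw [mk_image_eq hφ.1, C.2.2]
  · intro C C' h
    exact Subtype.ext (Set.image_injective.2 hφ.1 (congrArg Subtype.val h))

theorem exists_injective_mk_eq_of_nEq_le (h : ∀ κ, nEq E κ ≤ nEq F κ) :
    ∃ G : EqClasses E → EqClasses F, Injective G ∧ ∀ C, #(G C : Set Y) = #(C : Set X) :=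
  exists_injective_forall_eq_of_forall_mk_le _ _ fun κ => by
    simpa only [nEq_eq_mk] using h κ

theorem exists_isInvariantEmbedding_of_injective_of_mk_eq (hE : Equivalence E)
    (hF : Equivalence F) {G : EqClasses E → EqClasses F} (hG : Injective G)
    (hmk : ∀ C, #(G C : Set Y) = #(C : Set X)) :
    ∃ φ, IsInvariantEmbedding E F φ := by
  have e : ∀ C, {x // classOf E x = C} ≃ {y // classOf F y = G C} := fun C =>
    (Cardinal.eq.1 (by rw [mk_fiber_classOf hE, mk_fiber_classOf hF, hmk])).some
  have hrange := range_fiberwiseMap fun C => (e C).surjective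
  refine ⟨fiberwiseMap _ _ G fun C => e C,
    fiberwiseMap_injective hG fun C => (e C).injective, fun x x' => ?_, ?_⟩
  · rw [← classOf_eq_classOf_iff hF, comp_fiberwiseMap (q := classOf F),
      comp_fiberwiseMap (q := classOf F), hG.eq_iff, classOf_eq_classOf_iff hE]
  · rintro y y' hy hyy'
    rw [hrange] at hy ⊢
    rwa [Set.mem_preimage, (classOf_eq_classOf_iff hF).2 hyy']

end EqClasses

theorem stmt7 {X Y : Type u} (E : X → X → Prop) (F : Y → Y → Prop)
    (hE : Equivalence E) (hF : Equivalence F) :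
    (∃ φ : X → Y, Function.Injective φ ∧ (∀ x x' : X, E x x' ↔ F (φ x) (φ x')) ∧
        (∀ y y' : Y, y ∈ Set.range φ → F y y' → y' ∈ Set.range φ)) ↔
      ∀ κ : Cardinal.{u}, nEq E κ ≤ nEq F κ := by
  constructor
  · rintro ⟨φ, hφ⟩
    exact nEq_le_nEq_of_isInvariantEmbedding hφ
  · intro h
    obtain ⟨G, hG, hmk⟩ := exists_injective_mk_eq_of_nEq_le h
    exact exists_isInvariantEmbedding_of_injective_of_mk_eq hE hF hG hmk
end

section
/- For the equivalence relations E and F of the previous construction (E with ℵ₀ classes of size 1 and ℵ₀ classes of size ℵ_α for each countable limit α; F with ℵ₀ classes of size 1 and ℵ₀ classes of size ℵ_{α+1} for each countable limit α), for every cardinal κ we have n_{≤κ}(E) = n_{≤κ}(F) and n_{≥κ}(E) = n_{≥κ}(F). -/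
universe u

/-
Both relations have the same shape: the class sizes form the set `{1} ∪ f '' L`, where `L` is the
set of countable limit ordinals, `f` is `α ↦ ℵ_α` or `α ↦ ℵ_{α+1}`, and each size is carried by
`ℵ₀` classes. Counting classes fibrewise over their size, the number of classes whose size
satisfies `P` is `ℵ₀` times the number of sizes satisfying `P`. Both choices of `f` are strictly
increasing with `ℵ_α ≤ f α`, and `f α < ℵ_{ω₁}` for `α < ω₁`. So below any `κ < ℵ_{ω₁}` the sizes
are indexed by ordinals below a countable one, hence are countably many, while `L` has `ℵ₁`
elements above every countable ordinal. Hence for either relation `n_{≤κ}` is `0`, `ℵ₀` or `ℵ₁`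
according as `κ = 0`, `0 < κ < ℵ_{ω₁}` or `ℵ_{ω₁} ≤ κ`, and `n_{≥κ}` is `ℵ₁` or `0` according as
`κ < ℵ_{ω₁}` or not.
-/

universe v

open Cardinal Ordinal Order Set

theorem lift_mk_eq_lift_mk_mul_of_mk_preimage_eq {α : Type u} {β : Type v} (g : α → β)
    {c : Cardinal.{u}} (hg : ∀ b, #(g ⁻¹' {b}) = c) : lift.{v} #α = lift.{u} #β * lift.{v} c := by
  rw [← Cardinal.lift_umax.{u, v}]
  simpa [mk_sigma, hg, sum_const] using (mk_congr_lift (Equiv.sigmaPreimageEquiv g)).symm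

section EqClasses

variable {X : Type u} (E : X → X → Prop)

theorem nEq_mk_ne_zero {C : Set X} (hC : C ∈ EqClasses E) : nEq E #C ≠ 0 :=
  mk_ne_zero_iff.2 ⟨⟨C, hC, rfl⟩⟩

theorem lift_mk_eqClasses_eq (T : Set Cardinal.{u}) (hT : ∀ μ ∈ T, nEq E μ = ℵ₀)
    (hTc : ∀ μ ∉ T, nEq E μ = 0) (P : Cardinal.{u} → Prop) :
    lift.{u + 1} #{C : Set X // C ∈ EqClasses E ∧ P #C} = #{μ ∈ T | P μ} * ℵ₀ := by
  let g : {C : Set X // C ∈ EqClasses E ∧ P #C} → {μ ∈ T | P μ} := fun C =>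
    ⟨#C.1, not_not.1 fun h => nEq_mk_ne_zero E C.2.1 (hTc _ h), C.2.2⟩
  have hfiber : ∀ μ, #(g ⁻¹' {μ}) = ℵ₀ := fun μ => by
    rw [← hT μ μ.2.1]
    refine mk_congr ((Equiv.subtypeEquivRight fun C => ?_).trans
      (Equiv.subtypeSubtypeEquivSubtype fun h => ⟨h.1, h.2 ▸ μ.2.2⟩))
    simp [g, Subtype.ext_iff, C.2.1]
  rw [lift_mk_eq_lift_mk_mul_of_mk_preimage_eq g hfiber, lift_aleph0, Cardinal.lift_id'.{u, u + 1}]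

end EqClasses

def countableLimitOrdinals : Set Ordinal.{u} := {α | α < ω₁ ∧ IsSuccLimit α}

theorem aleph_one_le_mk_countableLimitOrdinals_ge {γ : Ordinal.{u}} (hγ : γ < ω₁) :
    ℵ₁ ≤ #{α ∈ countableLimitOrdinals | γ ≤ α} := by
  have hmono : StrictMono fun β : Ordinal.{u} => γ + ω * succ β := fun a b h =>
    (add_lt_add_iff_left γ).2 (mul_lt_mul_of_pos_left (succ_lt_succ h) omega0_pos)
  let e : Iio ω₁ → {α ∈ countableLimitOrdinals | γ ≤ α} := fun β =>
    ⟨γ + ω * succ β.1,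
      ⟨isPrincipal_add_omega 1 hγ
        (isPrincipal_mul_omega 1 omega0_lt_omega_one ((isSuccLimit_omega 1).succ_lt β.2)),
        isSuccLimit_add γ (isSuccLimit_mul_left isSuccLimit_omega0 (bot_lt_succ β.1))⟩,
      le_self_add⟩
  calc ℵ₁ = #(Iio (ω₁ : Ordinal.{u})) := by simp [Cardinal.mk_Iio_ordinal]
    _ ≤ _ := mk_le_of_injective (f := e) fun _ _ h =>
      Subtype.ext (hmono.injective (congrArg Subtype.val h))

theorem mk_countableLimitOrdinals : #countableLimitOrdinals.{u} = ℵ₁ := by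
  refine le_antisymm ?_ ((aleph_one_le_mk_countableLimitOrdinals_ge (omega_pos 1)).trans
    (mk_le_mk_of_subset (sep_subset _ _)))
  calc #countableLimitOrdinals.{u} ≤ #(Iio (ω₁ : Ordinal.{u})) :=
        mk_le_mk_of_subset fun _ h => h.1
    _ = ℵ₁ := by simp [Cardinal.mk_Iio_ordinal]

theorem exists_lt_aleph_of_lt_aleph_omega_one {κ : Cardinal.{u}} (hκ : κ < ℵ_ ω₁) :
    ∃ γ < ω₁, κ < ℵ_ γ := by
  rw [aleph_limit (isSuccLimit_omega 1)] at hκ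
  obtain ⟨⟨γ, hγ⟩, h⟩ := exists_lt_of_lt_ciSup' hκ
  exact ⟨γ, hγ, h⟩

theorem countable_Iio_of_lt_omega_one {γ : Ordinal.{u}} (hγ : γ < ω₁) : (Iio γ).Countable := by
  rw [← le_aleph0_iff_set_countable, Cardinal.mk_Iio_ordinal, ← lift_aleph0.{u + 1, u},
    Cardinal.lift_le, ← lt_aleph_one_iff, ← lt_omega_iff_card_lt]
  exact hγ

def sizeSpectrum (f : Ordinal.{u} → Cardinal.{u}) : Set Cardinal.{u} :=
  insert 1 (f '' countableLimitOrdinals)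

theorem lift_mk_eqClasses_eq_of_sizeSpectrum {X : Type u} (E : X → X → Prop)
    (f : Ordinal.{u} → Cardinal.{u})
    (h1 : nEq E 1 = ℵ₀) (h2 : ∀ α < ω₁, IsSuccLimit α → nEq E (f α) = ℵ₀)
    (h3 : ∀ κ : Cardinal.{u}, κ ≠ 1 → (¬ ∃ α, α < ω₁ ∧ IsSuccLimit α ∧ κ = f α) → nEq E κ = 0)
    (P : Cardinal.{u} → Prop) :
    lift.{u + 1} #{C : Set X // C ∈ EqClasses E ∧ P #C} = #{μ ∈ sizeSpectrum f | P μ} * ℵ₀ := by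
  refine lift_mk_eqClasses_eq E _ ?_ (fun μ hμ => h3 μ ?_ ?_) P
  · rintro μ (rfl | ⟨α, ⟨hα, hlim⟩, rfl⟩)
    exacts [h1, h2 α hα hlim]
  · rintro rfl
    exact hμ (mem_insert _ _)
  · rintro ⟨α, hα, hlim, rfl⟩
    exact hμ (mem_insert_of_mem _ ⟨α, ⟨hα, hlim⟩, rfl⟩)

structure IsAlephScale (f : Ordinal.{u} → Cardinal.{u}) : Prop where
  strictMono : StrictMono f
  aleph_le : ∀ α, ℵ_ α ≤ f α
  lt_aleph_omega_one : ∀ α < ω₁, f α < ℵ_ ω₁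

theorem isAlephScale_aleph : IsAlephScale.{u} (ℵ_ ·) :=
  ⟨aleph.strictMono, fun _ => le_rfl, fun _ => aleph_lt_aleph.2⟩

theorem isAlephScale_aleph_add_one : IsAlephScale.{u} fun α => ℵ_ (α + 1) where
  strictMono _ _ h := aleph_lt_aleph.2 (by simpa [← succ_eq_add_one] using h)
  aleph_le _ := aleph_le_aleph.2 (le_add_right le_rfl)
  lt_aleph_omega_one α hα := aleph_lt_aleph.2 <| by
    simpa [← succ_eq_add_one] using (isSuccLimit_omega 1).succ_lt hα

namespace IsAlephScale

variable {f : Ordinal.{u} → Cardinal.{u}}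

theorem one_lt (hf : IsAlephScale f) (α : Ordinal.{u}) : 1 < f α :=
  one_lt_aleph0.trans_le ((aleph0_le_aleph α).trans (hf.aleph_le α))

theorem mk_sizeSpectrum (hf : IsAlephScale f) : #(sizeSpectrum f) = ℵ₁ := by
  have h1 : (1 : Cardinal) ∉ f '' countableLimitOrdinals := fun ⟨α, _, h⟩ => (hf.one_lt α).ne' h
  rw [sizeSpectrum, mk_insert h1,
    mk_image_eq hf.strictMono.injective, mk_countableLimitOrdinals, add_one_eq (by simp)]

theorem lt_aleph_omega_one_of_mem (hf : IsAlephScale f) {μ : Cardinal.{u}}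
    (hμ : μ ∈ sizeSpectrum f) : μ < ℵ_ ω₁ := by
  rcases hμ with rfl | ⟨α, ⟨hα, -⟩, rfl⟩
  exacts [one_lt_aleph0.trans_le (aleph0_le_aleph _), hf.lt_aleph_omega_one α hα]

theorem mk_sizeSpectrum_le_mul_aleph0 (hf : IsAlephScale f) (κ : Cardinal.{u}) :
    #{μ ∈ sizeSpectrum f | μ ≤ κ} * ℵ₀ =
      if κ = 0 then 0 else if κ < ℵ_ ω₁ then ℵ₀ else ℵ₁ := by
  split_ifs with h0 hκ
  · have : {μ ∈ sizeSpectrum f | μ ≤ κ} = ∅ := by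
      refine sep_eq_empty_iff_mem_false.2 ?_
      rintro μ (rfl | ⟨α, -, rfl⟩) hμ <;> rw [h0, nonpos_iff_eq_zero] at hμ
      exacts [one_ne_zero hμ, (zero_lt_one.trans (hf.one_lt α)).ne' hμ]
    simp [this]
  · obtain ⟨γ, hγ, hκγ⟩ := exists_lt_aleph_of_lt_aleph_omega_one hκ
    have hsub : {μ ∈ sizeSpectrum f | μ ≤ κ} ⊆ insert 1 (f '' Iio γ) := by
      rintro μ ⟨rfl | ⟨α, -, rfl⟩, hμ⟩
      · exact mem_insert _ _
      · exact mem_insert_of_mem _ ⟨α, aleph_lt_aleph.1 ((hf.aleph_le α).trans_lt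
          (hμ.trans_lt hκγ)), rfl⟩
    refine mul_eq_right le_rfl ?_ ?_
    · exact le_aleph0_iff_set_countable.2
        (((countable_Iio_of_lt_omega_one hγ).image f).insert 1 |>.mono hsub)
    · exact mk_ne_zero_iff.2 ⟨⟨1, mem_insert _ _, Cardinal.one_le_iff_ne_zero.2 h0⟩⟩
  · have : {μ ∈ sizeSpectrum f | μ ≤ κ} = sizeSpectrum f :=
      sep_eq_self_iff_mem_true.2 fun _ hμ =>
        (hf.lt_aleph_omega_one_of_mem hμ).le.trans (not_lt.1 hκ)
    rw [this, hf.mk_sizeSpectrum, mul_aleph0_eq (by simp)]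

theorem mk_sizeSpectrum_ge_mul_aleph0 (hf : IsAlephScale f) (κ : Cardinal.{u}) :
    #{μ ∈ sizeSpectrum f | κ ≤ μ} * ℵ₀ = if κ < ℵ_ ω₁ then ℵ₁ else 0 := by
  split_ifs with hκ
  · obtain ⟨γ, hγ, hκγ⟩ := exists_lt_aleph_of_lt_aleph_omega_one hκ
    set tail := {α ∈ countableLimitOrdinals | γ ≤ α}
    have hsub : f '' tail ⊆ {μ ∈ sizeSpectrum f | κ ≤ μ} := by
      rintro _ ⟨α, ⟨hα, hγα⟩, rfl⟩
      exact ⟨mem_insert_of_mem _ ⟨α, hα, rfl⟩,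
        hκγ.le.trans ((aleph_le_aleph.2 hγα).trans (hf.aleph_le α))⟩
    have hcard : #{μ ∈ sizeSpectrum f | κ ≤ μ} = ℵ₁ := by
      refine le_antisymm (hf.mk_sizeSpectrum ▸ mk_le_mk_of_subset (sep_subset _ _)) ?_
      calc ℵ₁ ≤ #tail := aleph_one_le_mk_countableLimitOrdinals_ge hγ
        _ = #(f '' tail) := (mk_image_eq hf.strictMono.injective).symm
        _ ≤ _ := mk_le_mk_of_subset hsub
    rw [hcard, mul_aleph0_eq (by simp)]
  · have : {μ ∈ sizeSpectrum f | κ ≤ μ} = ∅ :=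
      sep_eq_empty_iff_mem_false.2 fun _ hμ hκμ =>
        hκ (hκμ.trans_lt (hf.lt_aleph_omega_one_of_mem hμ))
    simp [this]

end IsAlephScale

theorem stmt13_general {X Y : Type u} (E : X → X → Prop) (F : Y → Y → Prop)
    (hE1 : nEq E 1 = Cardinal.aleph0)
    (hE2 : ∀ α : Ordinal.{u}, α < (Cardinal.aleph 1).ord → Order.IsSuccLimit α →
        nEq E (Cardinal.aleph α) = Cardinal.aleph0)
    (hE3 : ∀ κ : Cardinal.{u}, κ ≠ 1 →
        (¬ ∃ α : Ordinal.{u}, α < (Cardinal.aleph 1).ord ∧ Order.IsSuccLimit α ∧ κ = Cardinal.aleph α) →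
        nEq E κ = 0)
    (hF1 : nEq F 1 = Cardinal.aleph0)
    (hF2 : ∀ α : Ordinal.{u}, α < (Cardinal.aleph 1).ord → Order.IsSuccLimit α →
        nEq F (Cardinal.aleph (α + 1)) = Cardinal.aleph0)
    (hF3 : ∀ κ : Cardinal.{u}, κ ≠ 1 →
        (¬ ∃ α : Ordinal.{u}, α < (Cardinal.aleph 1).ord ∧ Order.IsSuccLimit α ∧ κ = Cardinal.aleph (α + 1)) →
        nEq F κ = 0) :
    ∀ κ : Cardinal.{u}, nLe E κ = nLe F κ ∧ nGe E κ = nGe F κ := by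
  rw [ord_aleph] at hE2 hE3 hF2 hF3
  have hE := lift_mk_eqClasses_eq_of_sizeSpectrum E (ℵ_ ·) hE1 hE2 hE3
  have hF := lift_mk_eqClasses_eq_of_sizeSpectrum F (fun α => ℵ_ (α + 1)) hF1 hF2 hF3
  intro κ
  refine ⟨lift_injective ?_, lift_injective ?_⟩
  · calc lift (nLe E κ) = #{μ ∈ sizeSpectrum (ℵ_ ·) | μ ≤ κ} * ℵ₀ := hE (· ≤ κ)
      _ = #{μ ∈ sizeSpectrum (fun α => ℵ_ (α + 1)) | μ ≤ κ} * ℵ₀ := by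
        rw [isAlephScale_aleph.mk_sizeSpectrum_le_mul_aleph0,
          isAlephScale_aleph_add_one.mk_sizeSpectrum_le_mul_aleph0]
      _ = lift (nLe F κ) := (hF (· ≤ κ)).symm
  · calc lift (nGe E κ) = #{μ ∈ sizeSpectrum (ℵ_ ·) | κ ≤ μ} * ℵ₀ := hE (κ ≤ ·)
      _ = #{μ ∈ sizeSpectrum (fun α => ℵ_ (α + 1)) | κ ≤ μ} * ℵ₀ := by
        rw [isAlephScale_aleph.mk_sizeSpectrum_ge_mul_aleph0,
          isAlephScale_aleph_add_one.mk_sizeSpectrum_ge_mul_aleph0]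
      _ = lift (nGe F κ) := (hF (κ ≤ ·)).symm

theorem stmt13 {X Y : Type u} (E : X → X → Prop) (F : Y → Y → Prop)
    (hE : Equivalence E) (hF : Equivalence F)
    (hE1 : nEq E 1 = Cardinal.aleph0)
    (hE2 : ∀ α : Ordinal.{u}, α < (Cardinal.aleph 1).ord → Order.IsSuccLimit α →
        nEq E (Cardinal.aleph α) = Cardinal.aleph0)
    (hE3 : ∀ κ : Cardinal.{u}, κ ≠ 1 →
        (¬ ∃ α : Ordinal.{u}, α < (Cardinal.aleph 1).ord ∧ Order.IsSuccLimit α ∧ κ = Cardinal.aleph α) →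
        nEq E κ = 0)
    (hF1 : nEq F 1 = Cardinal.aleph0)
    (hF2 : ∀ α : Ordinal.{u}, α < (Cardinal.aleph 1).ord → Order.IsSuccLimit α →
        nEq F (Cardinal.aleph (α + 1)) = Cardinal.aleph0)
    (hF3 : ∀ κ : Cardinal.{u}, κ ≠ 1 →
        (¬ ∃ α : Ordinal.{u}, α < (Cardinal.aleph 1).ord ∧ Order.IsSuccLimit α ∧ κ = Cardinal.aleph (α + 1)) →
        nEq F κ = 0) :
    ∀ κ : Cardinal.{u}, nLe E κ = nLe F κ ∧ nGe E κ = nGe F κ :=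
  stmt13_general E F hE1 hE2 hE3 hF1 hF2 hF3
end
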